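/- arXiv:0704.0524 — 5 statements merged into one kernel-verified Lean document; each statement's English description precedes it below -/
import Mathlib

section
/- Let b₀, b₁ > 0. For every integer j ≥ 1 with π² j² > max{b₀, b₁}, there exists λ ∈ (−π²(j+1)², −π² j²) such that sin(√(−λ)) ≠ 0, λ + b₀ ≠ 0, λ + b₁ ≠ 0, and D(λ) = 0, where D(λ) = 1 + √(−λ)·(cos(√(−λ))/sin(√(−λ)))·(1/(λ+b₀) + 1/(λ+b₁)) + λ/((λ+b₀)(λ+b₁)). In particular, the equation D(λ) = 0 has infinitely many solutions λ < 0. -/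
/-!
Put `λ = -x²` with `x ∈ (jπ, (j+1)π)`. Clearing the cotangent, `sin x · D(-x²)` becomes a
function continuous on `[jπ, (j+1)π]`, whose value at `x = kπ` is
`(-1)ᵏ kπ (1/(b₀ - k²π²) + 1/(b₁ - k²π²))`. Once `j²π² > max b₀ b₁` the bracket is negative at
both endpoints, so the factor `(-1)ᵏ` makes the function change sign, and the intermediate value
theorem gives a zero, where `sin x ≠ 0`. These zeros lie below `-j²π²` for every large `j`, so
there are infinitely many.
-/

/-- The determinant function `D(λ)` of the characteristic matrix `F(λ)`, for `λ < 0`. -/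
noncomputable def detF (b₀ b₁ l : ℝ) : ℝ :=
  1 + Real.sqrt (-l) * (Real.cos (Real.sqrt (-l)) / Real.sin (Real.sqrt (-l))) *
      (1 / (l + b₀) + 1 / (l + b₁)) +
    l / ((l + b₀) * (l + b₁))

open Real Set

noncomputable def clearedDetF (b₀ b₁ x : ℝ) : ℝ :=
  sin x * (1 + -x ^ 2 / ((-x ^ 2 + b₀) * (-x ^ 2 + b₁))) +
    x * cos x * (1 / (-x ^ 2 + b₀) + 1 / (-x ^ 2 + b₁))

lemma sin_mul_detF_neg_sq (b₀ b₁ : ℝ) {x : ℝ} (hx : 0 ≤ x) (hsin : sin x ≠ 0) :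
    sin x * detF b₀ b₁ (-x ^ 2) = clearedDetF b₀ b₁ x := by
  rw [detF, clearedDetF, neg_neg, sqrt_sq hx]
  field_simp
  ring

lemma continuousOn_clearedDetF (b₀ b₁ : ℝ) :
    ContinuousOn (clearedDetF b₀ b₁) {x | -x ^ 2 + b₀ ≠ 0 ∧ -x ^ 2 + b₁ ≠ 0} := by
  unfold clearedDetF
  fun_prop (disch := intro x hx; first | exact mul_ne_zero hx.1 hx.2 | exact hx.1 | exact hx.2)

lemma clearedDetF_nat_mul_pi (b₀ b₁ : ℝ) (k : ℕ) :
    clearedDetF b₀ b₁ (k * π) =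
      (-1) ^ k * (k * π) * (1 / (-(k * π) ^ 2 + b₀) + 1 / (-(k * π) ^ 2 + b₁)) := by
  rw [clearedDetF, sin_nat_mul_pi, cos_nat_mul_pi]
  ring

lemma neg_sq_add_neg_of_max_lt_sq {b₀ b₁ x : ℝ} (h : max b₀ b₁ < x ^ 2) :
    -x ^ 2 + b₀ < 0 ∧ -x ^ 2 + b₁ < 0 :=
  ⟨by linarith [le_max_left b₀ b₁], by linarith [le_max_right b₀ b₁]⟩

lemma one_div_add_one_div_neg_of_max_lt_sq {b₀ b₁ x : ℝ} (h : max b₀ b₁ < x ^ 2) :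
    1 / (-x ^ 2 + b₀) + 1 / (-x ^ 2 + b₁) < 0 :=
  add_neg (one_div_neg.2 (neg_sq_add_neg_of_max_lt_sq h).1)
    (one_div_neg.2 (neg_sq_add_neg_of_max_lt_sq h).2)

lemma neg_one_pow_mul_clearedDetF_nat_mul_pi_neg {b₀ b₁ : ℝ} {k : ℕ} (hk : 1 ≤ k)
    (h : max b₀ b₁ < (k * π) ^ 2) : (-1) ^ k * clearedDetF b₀ b₁ (k * π) < 0 := by
  have hkπ : 0 < (k : ℝ) * π := mul_pos (by exact_mod_cast hk) pi_pos
  have hsq : (-1 : ℝ) ^ k * (-1) ^ k = 1 := by rw [← mul_pow]; norm_num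
  rw [clearedDetF_nat_mul_pi, ← mul_assoc, ← mul_assoc, hsq, one_mul]
  exact mul_neg_of_pos_of_neg hkπ (one_div_add_one_div_neg_of_max_lt_sq h)

lemma exists_mem_Ioo_eq_zero_of_mul_neg {f : ℝ → ℝ} {a b : ℝ} (hab : a ≤ b)
    (hf : ContinuousOn f (Icc a b)) (h : f a * f b < 0) : ∃ x ∈ Ioo a b, f x = 0 := by
  rcases mul_neg_iff.mp h with ⟨ha, hb⟩ | ⟨ha, hb⟩
  · exact intermediate_value_Ioo' hab hf ⟨hb, ha⟩
  · exact intermediate_value_Ioo hab hf ⟨ha, hb⟩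

lemma sin_ne_zero_of_mem_Ioo_nat_mul_pi {x : ℝ} {k : ℕ} (hx : x ∈ Ioo (k * π) ((k + 1) * π)) :
    sin x ≠ 0 := by
  have hpos := sin_pos_of_pos_of_lt_pi (sub_pos.2 hx.1) (by linarith [hx.2])
  rw [sin_sub_nat_mul_pi] at hpos
  intro h
  simp [h] at hpos

lemma clearedDetF_mul_clearedDetF_succ_neg {b₀ b₁ : ℝ} {j : ℕ} (hj : 1 ≤ j)
    (h : max b₀ b₁ < (j * π) ^ 2) :
    clearedDetF b₀ b₁ (j * π) * clearedDetF b₀ b₁ ((j + 1) * π) < 0 := by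
  have h₀ := neg_one_pow_mul_clearedDetF_nat_mul_pi_neg hj h
  have h₁ := neg_one_pow_mul_clearedDetF_nat_mul_pi_neg (Nat.le_add_left 1 j)
    (h.trans_le (by gcongr; exact_mod_cast j.le_succ))
  have hsq : (-1 : ℝ) ^ j * (-1) ^ j = 1 := by rw [← mul_pow]; norm_num
  rw [Nat.cast_succ, pow_succ] at h₁
  have hprod := mul_pos_of_neg_of_neg h₀ h₁
  linear_combination hprod - (clearedDetF b₀ b₁ (j * π) * clearedDetF b₀ b₁ ((j + 1) * π)) * hsq

theorem exists_detF_eq_zero_mem_Ioo {b₀ b₁ : ℝ} {j : ℕ} (hj : 1 ≤ j)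
    (hmax : max b₀ b₁ < π ^ 2 * j ^ 2) :
    ∃ l ∈ Ioo (-(π ^ 2 * ((j : ℝ) + 1) ^ 2)) (-(π ^ 2 * (j : ℝ) ^ 2)),
      sin (√(-l)) ≠ 0 ∧ l + b₀ ≠ 0 ∧ l + b₁ ≠ 0 ∧ detF b₀ b₁ l = 0 := by
  have hjπ : 0 < (j : ℝ) * π := mul_pos (by exact_mod_cast hj) pi_pos
  have hmax_sq : ∀ x, j * π ≤ x → max b₀ b₁ < x ^ 2 := fun x hx => by nlinarith
  obtain ⟨x, hx, hx_zero⟩ := exists_mem_Ioo_eq_zero_of_mul_neg (by nlinarith [pi_pos])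
    ((continuousOn_clearedDetF b₀ b₁).mono fun y hy =>
      (neg_sq_add_neg_of_max_lt_sq (hmax_sq y hy.1)).imp ne_of_lt ne_of_lt)
    (clearedDetF_mul_clearedDetF_succ_neg hj (hmax_sq _ le_rfl))
  have hx_pos : 0 < x := hjπ.trans hx.1
  have hsin := sin_ne_zero_of_mem_Ioo_nat_mul_pi hx
  have hden := neg_sq_add_neg_of_max_lt_sq (hmax_sq x hx.1.le)
  refine ⟨-x ^ 2, ⟨by nlinarith [hx.2], by nlinarith [hx.1]⟩, ?_, hden.1.ne, hden.2.ne, ?_⟩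
  · rwa [neg_neg, sqrt_sq hx_pos.le]
  · have hcleared := sin_mul_detF_neg_sq b₀ b₁ hx_pos.le hsin
    rw [hx_zero] at hcleared
    exact (mul_eq_zero.1 hcleared).resolve_left hsin

lemma exists_nat_one_le_lt_pi_sq_mul_sq (c : ℝ) : ∃ j : ℕ, 1 ≤ j ∧ c < π ^ 2 * j ^ 2 := by
  refine ⟨⌈c⌉₊ + 1, by omega, ?_⟩
  have hj : (1 : ℝ) ≤ (⌈c⌉₊ + 1 : ℕ) := by exact_mod_cast Nat.le_add_left 1 _
  have hπ : (1 : ℝ) ≤ π ^ 2 := by nlinarith [pi_gt_three]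
  calc c < (⌈c⌉₊ + 1 : ℕ) := by push_cast; linarith [Nat.le_ceil c]
    _ ≤ (⌈c⌉₊ + 1 : ℕ) ^ 2 := by nlinarith
    _ ≤ π ^ 2 * (⌈c⌉₊ + 1 : ℕ) ^ 2 := le_mul_of_one_le_left (by positivity) hπ

theorem detF_has_infinitely_many_zeros_general (b₀ b₁ : ℝ) :
    (∀ j : ℕ, 1 ≤ j → max b₀ b₁ < Real.pi ^ 2 * (j : ℝ) ^ 2 →
      ∃ l : ℝ, l ∈ Set.Ioo (-(Real.pi ^ 2 * ((j : ℝ) + 1) ^ 2)) (-(Real.pi ^ 2 * (j : ℝ) ^ 2)) ∧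
        Real.sin (Real.sqrt (-l)) ≠ 0 ∧ l + b₀ ≠ 0 ∧ l + b₁ ≠ 0 ∧ detF b₀ b₁ l = 0) ∧
    {l : ℝ | l < 0 ∧ Real.sin (Real.sqrt (-l)) ≠ 0 ∧ l + b₀ ≠ 0 ∧ l + b₁ ≠ 0 ∧
      detF b₀ b₁ l = 0}.Infinite := by
  refine ⟨fun j hj hmax => exists_detF_eq_zero_mem_Ioo hj hmax, ?_⟩
  refine Set.infinite_of_not_bddBelow fun ⟨M, hM⟩ => ?_
  obtain ⟨j, hj, hlarge⟩ := exists_nat_one_le_lt_pi_sq_mul_sq (max (max b₀ b₁) (-M))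
  obtain ⟨l, hl, hzero⟩ := exists_detF_eq_zero_mem_Ioo hj ((le_max_left _ _).trans_lt hlarge)
  have hl_neg : l < 0 := hl.2.trans_le (by simp only [Left.neg_nonpos_iff]; positivity)
  have hM_le : M ≤ l := hM ⟨hl_neg, hzero⟩
  linarith [le_max_right (max b₀ b₁) (-M), hl.2]

/-- For `b₀, b₁ > 0`, every interval `(−π²(j+1)², −π²j²)` with `π²j² > max{b₀,b₁}`
contains a zero of `D`; in particular `D(λ) = 0` has infinitely many solutions
`λ < 0`. -/
theorem detF_has_infinitely_many_zeros (b₀ b₁ : ℝ) (hb₀ : 0 < b₀) (hb₁ : 0 < b₁) :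
    (∀ j : ℕ, 1 ≤ j → max b₀ b₁ < Real.pi ^ 2 * (j : ℝ) ^ 2 →
      ∃ l : ℝ, l ∈ Set.Ioo (-(Real.pi ^ 2 * ((j : ℝ) + 1) ^ 2)) (-(Real.pi ^ 2 * (j : ℝ) ^ 2)) ∧
        Real.sin (Real.sqrt (-l)) ≠ 0 ∧ l + b₀ ≠ 0 ∧ l + b₁ ≠ 0 ∧ detF b₀ b₁ l = 0) ∧
    {l : ℝ | l < 0 ∧ Real.sin (Real.sqrt (-l)) ≠ 0 ∧ l + b₀ ≠ 0 ∧ l + b₁ ≠ 0 ∧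
      detF b₀ b₁ l = 0}.Infinite :=
  detF_has_infinitely_many_zeros_general b₀ b₁
end

section
/- Let b₀, b₁ > 0 and let λ < 0 satisfy sin(√(−λ)) ≠ 0, λ + b₀ ≠ 0, λ + b₁ ≠ 0, and D(λ) = 0. Set μ = √(−λ) and define e : [0,1] → ℝ by e(x) = (μ/(b₀+λ))·cos(μx) + sin(μx). Then e is not identically zero, e''(x) = λ e(x) for all x ∈ [0,1], e'(0) = (λ + b₀) e(0), and −e'(1) = (λ + b₁) e(1). -/
/-!
Every function `a cos(μx) + b sin(μx)` solves `e'' = -μ² e`, which is `e'' = λ e` for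
`μ = √(-λ)`. Choosing `a = μ/(b₀+λ)`, `b = 1` enforces the boundary relation at `0`, since
`e'(0) = μ b` and `e(0) = a`; after clearing the denominators `sin μ (λ+b₀)(λ+b₁)`, the equation
`D(λ) = 0` is exactly the boundary relation at `1` multiplied by `λ + b₀`.
-/

open Real

noncomputable def trigComb (a b μ x : ℝ) : ℝ :=
  a * cos (μ * x) + b * sin (μ * x)

section trigComb

variable (a b μ : ℝ)

@[simp]
theorem trigComb_zero : trigComb a b μ 0 = a := by
  simp [trigComb]

theorem hasDerivAt_trigComb (x : ℝ) :
    HasDerivAt (trigComb a b μ) (trigComb (μ * b) (-(μ * a)) μ x) x := by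
  have hlin : HasDerivAt (fun y => μ * y) μ x := by
    simpa using (hasDerivAt_id x).const_mul μ
  have hcos := ((hasDerivAt_cos (μ * x)).comp x hlin).const_mul a
  have hsin := ((hasDerivAt_sin (μ * x)).comp x hlin).const_mul b
  exact (hcos.add hsin).congr_deriv (by simp only [trigComb]; ring)

theorem deriv_trigComb : deriv (trigComb a b μ) = trigComb (μ * b) (-(μ * a)) μ :=
  funext fun x => (hasDerivAt_trigComb a b μ x).deriv

theorem deriv_deriv_trigComb (x : ℝ) :
    deriv (deriv (trigComb a b μ)) x = -μ ^ 2 * trigComb a b μ x := by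
  rw [deriv_trigComb, deriv_trigComb]
  simp only [trigComb]
  ring

end trigComb

theorem sin_mul_mul_detF {b₀ b₁ l : ℝ} (hsin : sin (√(-l)) ≠ 0) (h0 : l + b₀ ≠ 0)
    (h1 : l + b₁ ≠ 0) :
    sin (√(-l)) * ((l + b₀) * (l + b₁)) * detF b₀ b₁ l =
      ((l + b₀) * (l + b₁) + l) * sin (√(-l)) + (2 * l + b₀ + b₁) * √(-l) * cos (√(-l)) := by
  unfold detF
  field_simp
  ring

theorem eigenfunction_of_detF_zero_general (b₀ b₁ : ℝ)
    (l : ℝ) (hl : l < 0) (hsin : Real.sin (Real.sqrt (-l)) ≠ 0)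
    (h0 : l + b₀ ≠ 0) (h1 : l + b₁ ≠ 0) (hD : detF b₀ b₁ l = 0)
    (μ : ℝ) (hμ : μ = Real.sqrt (-l))
    (e : ℝ → ℝ) (he : e = fun x => μ / (b₀ + l) * Real.cos (μ * x) + Real.sin (μ * x)) :
    (∃ x ∈ Set.Icc (0:ℝ) 1, e x ≠ 0) ∧
    (∀ x ∈ Set.Icc (0:ℝ) 1, deriv (deriv e) x = l * e x) ∧
    deriv e 0 = (l + b₀) * e 0 ∧
    -(deriv e 1) = (l + b₁) * e 1 := by
  have hμpos : 0 < μ := hμ ▸ sqrt_pos.mpr (neg_pos.mpr hl)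
  have hμsq : μ ^ 2 = -l := hμ ▸ sq_sqrt (neg_nonneg.mpr hl.le)
  have hb₀l : b₀ + l ≠ 0 := by rwa [add_comm]
  have hetrig : e = trigComb (μ / (b₀ + l)) 1 μ := by
    rw [he]; funext x; simp [trigComb]
  have hDμ := sin_mul_mul_detF hsin h0 h1
  rw [hD, mul_zero, ← hμ] at hDμ
  subst hetrig
  refine ⟨⟨0, by norm_num, by simpa using div_ne_zero hμpos.ne' hb₀l⟩,
    fun x _ => by rw [deriv_deriv_trigComb, hμsq, neg_neg], ?_, ?_⟩
  · rw [deriv_trigComb, trigComb_zero, trigComb_zero]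
    field_simp
    ring
  · rw [deriv_trigComb]
    simp only [trigComb, mul_one]
    field_simp
    linear_combination sin μ * hμsq + hDμ

/-- If `λ < 0` is a zero of `D`, then `e(x) = (μ/(b₀+λ)) cos(μx) + sin(μx)`
(with `μ = √(−λ)`) is a nonzero eigenfunction: `e'' = λe` on `[0,1]` with the
boundary relations `e'(0) = (λ+b₀) e(0)` and `−e'(1) = (λ+b₁) e(1)`. -/
theorem eigenfunction_of_detF_zero (b₀ b₁ : ℝ) (hb₀ : 0 < b₀) (hb₁ : 0 < b₁)
    (l : ℝ) (hl : l < 0) (hsin : Real.sin (Real.sqrt (-l)) ≠ 0)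
    (h0 : l + b₀ ≠ 0) (h1 : l + b₁ ≠ 0) (hD : detF b₀ b₁ l = 0)
    (μ : ℝ) (hμ : μ = Real.sqrt (-l))
    (e : ℝ → ℝ) (he : e = fun x => μ / (b₀ + l) * Real.cos (μ * x) + Real.sin (μ * x)) :
    (∃ x ∈ Set.Icc (0:ℝ) 1, e x ≠ 0) ∧
    (∀ x ∈ Set.Icc (0:ℝ) 1, deriv (deriv e) x = l * e x) ∧
    deriv e 0 = (l + b₀) * e 0 ∧
    -(deriv e 1) = (l + b₁) * e 1 :=
  eigenfunction_of_detF_zero_general b₀ b₁ l hl hsin h0 h1 hD μ hμ e he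
end

section
/- Let b₀, b₁ > 0 and let λ < 0 satisfy sin(√(−λ)) ≠ 0, λ + b₀ ≠ 0, λ + b₁ ≠ 0. Then there exists a twice continuously differentiable function u : [0,1] → ℝ, not identically zero, satisfying u''(x) = λ u(x) on [0,1], u'(0) = (λ + b₀) u(0), and −u'(1) = (λ + b₁) u(1), if and only if D(λ) = 0, where D(λ) = 1 + √(−λ)·(cos(√(−λ))/sin(√(−λ)))·(1/(λ+b₀) + 1/(λ+b₁)) + λ/((λ+b₀)(λ+b₁)). -/
/-!
Write `λ = -ω²` with `ω = √(-λ) > 0`. Every solution of `u'' = -ω² u` on `[0,1]` is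
`u(0) cos ωx + (u'(0)/ω) sin ωx`, because rotating the phase vector `(ω u, u')` by the angle
`-ωx` gives a constant. The boundary condition at `0` fixes `u'(0) = (λ + b₀) u(0)`, with
`u(0) ≠ 0` for a nontrivial solution, and the condition at `1` then holds exactly when
`(ac - ω²) sin ω + ω (a + c) cos ω = 0`, where `a = λ + b₀`, `c = λ + b₁`.
This expression is `D(λ) · a c sin ω`.
-/

open Real Set

noncomputable def sinusoid (ω p q x : ℝ) : ℝ := p * cos (ω * x) + q * sin (ω * x)

theorem hasDerivAt_sinusoid_of_coeffs {ω x p' q' : ℝ} {p q : ℝ → ℝ} (hp : HasDerivAt p p' x)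
    (hq : HasDerivAt q q' x) :
    HasDerivAt (fun y ↦ sinusoid ω (p y) (q y) y)
      (sinusoid ω (p' + ω * q x) (q' - ω * p x) x) x := by
  have hcos := ((hasDerivAt_id x).const_mul ω).cos
  have hsin := ((hasDerivAt_id x).const_mul ω).sin
  refine ((hp.mul hcos).add (hq.mul hsin)).congr_deriv ?_
  simp only [sinusoid, id]
  ring

theorem hasDerivAt_sinusoid (ω p q x : ℝ) :
    HasDerivAt (sinusoid ω p q) (sinusoid ω (ω * q) (-(ω * p)) x) x := by
  simpa using hasDerivAt_sinusoid_of_coeffs (ω := ω) (hasDerivAt_const x p) (hasDerivAt_const x q)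

theorem deriv_sinusoid (ω p q : ℝ) :
    deriv (sinusoid ω p q) = sinusoid ω (ω * q) (-(ω * p)) :=
  funext fun x ↦ (hasDerivAt_sinusoid ω p q x).deriv

theorem contDiff_sinusoid (ω p q : ℝ) {n : WithTop ℕ∞} : ContDiff ℝ n (sinusoid ω p q) := by
  unfold sinusoid
  fun_prop

theorem sinusoid_zero (ω p q : ℝ) : sinusoid ω p q 0 = p := by
  simp [sinusoid]

theorem sinusoid_one (ω p q : ℝ) : sinusoid ω p q 1 = p * cos ω + q * sin ω := by
  simp [sinusoid]

section HarmonicOscillator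

variable {u : ℝ → ℝ} {ω b : ℝ}

theorem rotated_phase_eq (hu : Differentiable ℝ u) (hu' : Differentiable ℝ (deriv u))
    (hode : ∀ x ∈ Icc 0 b, deriv (deriv u) x = -ω ^ 2 * u x) {x : ℝ} (hx : x ∈ Icc 0 b) :
    sinusoid ω (ω * u x) (-deriv u x) x = ω * u 0 ∧
      sinusoid ω (deriv u x) (ω * u x) x = deriv u 0 := by
  have hconst : ∀ {f : ℝ → ℝ}, Continuous f → (∀ y ∈ Icc 0 b, HasDerivAt f 0 y) → f x = f 0 :=
    fun hc hd ↦ constant_of_has_deriv_right_zero hc.continuousOn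
      (fun y hy ↦ (hd y (Ico_subset_Icc_self hy)).hasDerivWithinAt) x hx
  have hdu : ∀ y, HasDerivAt u (deriv u y) y := fun y ↦ (hu y).hasDerivAt
  have hddu : ∀ y, HasDerivAt (deriv u) (deriv (deriv u) y) y := fun y ↦ (hu' y).hasDerivAt
  have hc := hu.continuous
  have hc' := hu'.continuous
  constructor
  · refine (hconst (f := fun y ↦ sinusoid ω (ω * u y) (-deriv u y) y) (by unfold sinusoid; fun_prop)
      fun y hy ↦ ?_).trans (by simp [sinusoid])
    refine (hasDerivAt_sinusoid_of_coeffs ((hdu y).const_mul ω) (hddu y).neg).congr_deriv ?_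
    simp only [hode y hy, sinusoid, Pi.neg_apply]
    ring
  · refine (hconst (f := fun y ↦ sinusoid ω (deriv u y) (ω * u y) y) (by unfold sinusoid; fun_prop)
      fun y hy ↦ ?_).trans (by simp [sinusoid])
    refine (hasDerivAt_sinusoid_of_coeffs (hddu y) ((hdu y).const_mul ω)).congr_deriv ?_
    simp only [hode y hy, sinusoid]
    ring

theorem eq_sinusoid_of_deriv_deriv_eq (hu : Differentiable ℝ u)
    (hu' : Differentiable ℝ (deriv u)) (hode : ∀ x ∈ Icc 0 b, deriv (deriv u) x = -ω ^ 2 * u x)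
    {x : ℝ} (hx : x ∈ Icc 0 b) :
    ω * u x = sinusoid ω (ω * u 0) (deriv u 0) x ∧
      deriv u x = sinusoid ω (deriv u 0) (-(ω * u 0)) x := by
  obtain ⟨hP, hQ⟩ := rotated_phase_eq hu hu' hode hx
  have hpyth := sin_sq_add_cos_sq (ω * x)
  simp only [sinusoid] at hP hQ ⊢
  rw [← hP, ← hQ]
  constructor
  · linear_combination -(ω * u x) * hpyth
  · linear_combination -(deriv u x) * hpyth

end HarmonicOscillator

/-- The determinant of the linear system that the boundary conditions `u'(0) = a u(0)` and
`-u'(1) = c u(1)` impose on the coefficients `(p, q)` of `u = sinusoid ω p q`. -/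
noncomputable def charDet (ω a c : ℝ) : ℝ := (a * c - ω ^ 2) * sin ω + ω * (a + c) * cos ω

theorem detF_eq_zero_iff {b₀ b₁ l : ℝ} (hl : l < 0) (hsin : sin √(-l) ≠ 0) (h0 : l + b₀ ≠ 0)
    (h1 : l + b₁ ≠ 0) : detF b₀ b₁ l = 0 ↔ charDet √(-l) (l + b₀) (l + b₁) = 0 := by
  have hω : √(-l) ^ 2 = -l := sq_sqrt (by linarith)
  have hdetF : detF b₀ b₁ l = charDet √(-l) (l + b₀) (l + b₁) / ((l + b₀) * (l + b₁) * sin √(-l)) := by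
    unfold detF charDet
    rw [hω]
    field_simp
    ring
  simp [hdetF, h0, h1, hsin]

theorem eigenvalue_iff_detF_zero_general (b₀ b₁ : ℝ)
    (l : ℝ) (hl : l < 0) (hsin : Real.sin (Real.sqrt (-l)) ≠ 0)
    (h0 : l + b₀ ≠ 0) (h1 : l + b₁ ≠ 0) :
    (∃ u : ℝ → ℝ, ContDiff ℝ 2 u ∧ (∃ x ∈ Set.Icc (0:ℝ) 1, u x ≠ 0) ∧
      (∀ x ∈ Set.Icc (0:ℝ) 1, deriv (deriv u) x = l * u x) ∧
      deriv u 0 = (l + b₀) * u 0 ∧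
      -(deriv u 1) = (l + b₁) * u 1) ↔
    detF b₀ b₁ l = 0 := by
  rw [detF_eq_zero_iff hl hsin h0 h1]
  set ω := √(-l)
  have hω : 0 < ω := sqrt_pos.2 (neg_pos.2 hl)
  have hl' : l = -ω ^ 2 := by rw [sq_sqrt (by linarith)]; ring
  constructor
  · rintro ⟨u, hu, ⟨x₀, hx₀, hux₀⟩, hode, hbc0, hbc1⟩
    have hsol := fun x (hx : x ∈ Icc (0 : ℝ) 1) ↦ eq_sinusoid_of_deriv_deriv_eq
      (hu.differentiable two_ne_zero) hu.differentiable_deriv_two (hl' ▸ hode) hx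
    have hu0 : u 0 ≠ 0 := fun h ↦
      hux₀ (by simpa [h, hbc0, sinusoid, hω.ne'] using (hsol x₀ hx₀).1)
    obtain ⟨hu1, hdu1⟩ := hsol 1 ⟨zero_le_one, le_rfl⟩
    rw [sinusoid_one, hbc0] at hu1 hdu1
    refine (mul_eq_zero.1 (?_ : u 0 * charDet ω (l + b₀) (l + b₁) = 0)).resolve_left hu0
    unfold charDet
    linear_combination -ω * hbc1 - (l + b₁) * hu1 - ω * hdu1
  · intro hchar
    refine ⟨sinusoid ω ω (l + b₀), contDiff_sinusoid _ _ _,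
      ⟨0, ⟨le_rfl, zero_le_one⟩, by simpa [sinusoid_zero] using hω.ne'⟩, fun x _ ↦ ?_, ?_, ?_⟩
    · simp only [deriv_sinusoid, sinusoid, hl']
      ring
    · simp only [deriv_sinusoid, sinusoid_zero]
      ring
    · simp only [deriv_sinusoid, sinusoid_one]
      unfold charDet at hchar
      linear_combination -hchar

/-- A negative number `λ` (with `sin √(−λ) ≠ 0`, `λ + b₀ ≠ 0`, `λ + b₁ ≠ 0`) is an
eigenvalue of the matrix operator — i.e. there is a nonzero `C²` solution of
`u'' = λu` on `[0,1]` with `u'(0) = (λ+b₀)u(0)` and `−u'(1) = (λ+b₁)u(1)` —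
if and only if `D(λ) = 0`. -/
theorem eigenvalue_iff_detF_zero (b₀ b₁ : ℝ) (hb₀ : 0 < b₀) (hb₁ : 0 < b₁)
    (l : ℝ) (hl : l < 0) (hsin : Real.sin (Real.sqrt (-l)) ≠ 0)
    (h0 : l + b₀ ≠ 0) (h1 : l + b₁ ≠ 0) :
    (∃ u : ℝ → ℝ, ContDiff ℝ 2 u ∧ (∃ x ∈ Set.Icc (0:ℝ) 1, u x ≠ 0) ∧
      (∀ x ∈ Set.Icc (0:ℝ) 1, deriv (deriv u) x = l * u x) ∧
      deriv u 0 = (l + b₀) * u 0 ∧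
      -(deriv u 1) = (l + b₁) * u 1) ↔
    detF b₀ b₁ l = 0 :=
  eigenvalue_iff_detF_zero_general b₀ b₁ l hl hsin h0 h1
end

section
/- Let b₀, b₁ > 0 and λ > 0. If u : [0,1] → ℝ is twice continuously differentiable and satisfies u''(x) = λ u(x) on [0,1], u'(0) = (λ + b₀) u(0), and −u'(1) = (λ + b₁) u(1), then u is identically zero. That is, the matrix operator of the heat equation with dynamical boundary conditions has no strictly positive eigenvalues. -/
/-! The energy `E = u u'` satisfies `E' = u'² + λu² ≥ 0`, while the boundary conditions give
`E(0) = (λ + b₀) u(0)² ≥ 0` and `E(1) = -(λ + b₁) u(1)² ≤ 0`. So `E` is constant on `[0,1]`,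
its derivative `u'² + λu²` vanishes inside, and `u = 0` there, hence on `[0,1]` by
continuity. -/

open Set Filter

theorem ContDiff.hasDerivAt_mul_deriv {u : ℝ → ℝ} (hu : ContDiff ℝ 2 u) (x : ℝ) :
    HasDerivAt (fun y => u y * deriv u y) (deriv u x ^ 2 + u x * deriv (deriv u) x) x := by
  have hu' : Differentiable ℝ (deriv u) :=
    (contDiff_succ_iff_deriv.mp hu).2.2.differentiable one_ne_zero
  exact ((hu.differentiable two_ne_zero x).hasDerivAt.mul (hu' x).hasDerivAt).congr_deriv
    (by ring)

theorem monotoneOn_mul_deriv_of_deriv_deriv_eq {u : ℝ → ℝ} {l a b : ℝ} (hl : 0 ≤ l)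
    (hu : ContDiff ℝ 2 u) (hode : ∀ x ∈ Icc a b, deriv (deriv u) x = l * u x) :
    MonotoneOn (fun y => u y * deriv u y) (Icc a b) := by
  have hdiff : Differentiable ℝ fun y => u y * deriv u y := fun x =>
    (hu.hasDerivAt_mul_deriv x).differentiableAt
  refine monotoneOn_of_deriv_nonneg (convex_Icc a b) hdiff.continuous.continuousOn
    hdiff.differentiableOn fun x hx => ?_
  rw [interior_Icc] at hx
  rw [(hu.hasDerivAt_mul_deriv x).deriv, hode x (Ioo_subset_Icc_self hx)]
  nlinarith [sq_nonneg (deriv u x), sq_nonneg (u x)]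

theorem MonotoneOn.deriv_eq_zero_of_le {f : ℝ → ℝ} {a b x : ℝ} (hf : MonotoneOn f (Icc a b))
    (hba : f b ≤ f a) (hx : x ∈ Ioo a b) : deriv f x = 0 := by
  have hab : a ≤ b := hx.1.le.trans hx.2.le
  have hconst : EqOn f (fun _ => f a) (Icc a b) := fun y hy =>
    le_antisymm ((hf hy (right_mem_Icc.2 hab) hy.2).trans hba) (hf (left_mem_Icc.2 hab) hy hy.1)
  have hnhds : f =ᶠ[nhds x] fun _ => f a :=
    eventually_of_mem (Icc_mem_nhds hx.1 hx.2) hconst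
  rw [hnhds.deriv_eq, deriv_const]

/-- The matrix operator of the heat equation with dynamical boundary conditions
has no strictly positive eigenvalues: for `b₀, b₁ > 0` and `λ > 0`, any `C²`
solution of `u'' = λu` on `[0,1]` with `u'(0) = (λ+b₀)u(0)` and
`−u'(1) = (λ+b₁)u(1)` vanishes identically on `[0,1]`. -/
theorem no_positive_eigenvalues (b₀ b₁ l : ℝ) (hb₀ : 0 < b₀) (hb₁ : 0 < b₁)
    (hl : 0 < l) (u : ℝ → ℝ) (hu : ContDiff ℝ 2 u)
    (hode : ∀ x ∈ Set.Icc (0:ℝ) 1, deriv (deriv u) x = l * u x)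
    (hbc0 : deriv u 0 = (l + b₀) * u 0)
    (hbc1 : -(deriv u 1) = (l + b₁) * u 1) :
    ∀ x ∈ Set.Icc (0:ℝ) 1, u x = 0 := by
  have hmono := monotoneOn_mul_deriv_of_deriv_deriv_eq hl.le hu hode
  have hE1_le_E0 : u 1 * deriv u 1 ≤ u 0 * deriv u 0 := by
    have hE0 : u 0 * deriv u 0 = (l + b₀) * u 0 ^ 2 := by linear_combination u 0 * hbc0
    have hE1 : u 1 * deriv u 1 = -((l + b₁) * u 1 ^ 2) := by linear_combination -u 1 * hbc1
    rw [hE0, hE1]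
    linarith [mul_nonneg (add_pos hl hb₀).le (sq_nonneg (u 0)),
      mul_nonneg (add_pos hl hb₁).le (sq_nonneg (u 1))]
  have hinterior : Ioo (0:ℝ) 1 ⊆ u ⁻¹' {0} := fun x hx => by
    have henergy : deriv u x ^ 2 + l * u x ^ 2 = 0 :=
      calc deriv u x ^ 2 + l * u x ^ 2 = deriv u x ^ 2 + u x * deriv (deriv u) x := by
            rw [hode x (Ioo_subset_Icc_self hx)]; ring
        _ = deriv (fun y => u y * deriv u y) x := (hu.hasDerivAt_mul_deriv x).deriv.symm
        _ = 0 := hmono.deriv_eq_zero_of_le hE1_le_E0 hx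
    have : u x ^ 2 = 0 := by nlinarith [sq_nonneg (deriv u x), sq_nonneg (u x)]
    exact pow_eq_zero_iff two_ne_zero |>.1 this
  intro x hx
  rw [← closure_Ioo zero_ne_one] at hx
  exact closure_minimal hinterior (isClosed_singleton.preimage hu.continuous) hx
end

section
/- Let g : ℝ → ℝ be continuously differentiable with |g'(a)| ≤ L for all a ∈ ℝ. Then for all u, v ∈ L²(0,1), lim_{r → 0, r ≠ 0} ∫₀¹ | (g(u(x) + r·v(x)) − g(u(x)))/r − g'(u(x))·v(x) |² dx = 0. In other words, the Nemytskii operator u ↦ g∘u from L²(0,1) to L²(0,1) has directional (Gâteaux) derivative at u in direction v given by the function x ↦ g'(u(x))·v(x). -/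
/-!
The difference quotient `(g (u + r v) - g u) / r` tends pointwise to `g' u · v` as `r → 0`, and by
the mean value theorem it is bounded by `L |v|`. Hence the squared remainder is dominated by the
integrable function `(2 L |v|)²`, and dominated convergence gives the limit `0`.
-/

open MeasureTheory Filter Topology

section DifferenceQuotient

variable {g : ℝ → ℝ} {L : ℝ}

theorem abs_sub_le_of_abs_deriv_le (hg : Differentiable ℝ g) (hg' : ∀ a, |deriv g a| ≤ L)
    (a b : ℝ) : |g b - g a| ≤ L * |b - a| :=
  convex_univ.norm_image_sub_le_of_norm_deriv_le (fun x _ => hg x) (fun x _ => hg' x)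
    (Set.mem_univ a) (Set.mem_univ b)

/-- The bound also holds at `r = 0`, where the quotient is `0` by the convention `x / 0 = 0`. -/
theorem abs_difference_quotient_le (hg : Differentiable ℝ g) (hg' : ∀ a, |deriv g a| ≤ L)
    (a b r : ℝ) : |(g (a + r * b) - g a) / r| ≤ L * |b| := by
  have hL : 0 ≤ L := (abs_nonneg _).trans (hg' 0)
  rcases eq_or_ne r 0 with rfl | hr
  · simpa using mul_nonneg hL (abs_nonneg b)
  rw [abs_div, div_le_iff₀ (abs_pos.mpr hr)]
  calc |g (a + r * b) - g a| ≤ L * |a + r * b - a| := abs_sub_le_of_abs_deriv_le hg hg' _ _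
    _ = L * |b| * |r| := by rw [add_sub_cancel_left, abs_mul]; ring

theorem abs_difference_quotient_sub_deriv_mul_le (hg : Differentiable ℝ g)
    (hg' : ∀ a, |deriv g a| ≤ L) (a b r : ℝ) :
    |(g (a + r * b) - g a) / r - deriv g a * b| ≤ 2 * L * |b| :=
  calc |(g (a + r * b) - g a) / r - deriv g a * b|
      ≤ |(g (a + r * b) - g a) / r| + |deriv g a * b| := abs_sub _ _
    _ ≤ L * |b| + L * |b| := by
      gcongr
      · exact abs_difference_quotient_le hg hg' a b r
      · rw [abs_mul]; exact mul_le_mul_of_nonneg_right (hg' a) (abs_nonneg b)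
    _ = 2 * L * |b| := by ring

theorem HasDerivAt.tendsto_difference_quotient {g' a : ℝ} (hg : HasDerivAt g g' a) (b : ℝ) :
    Tendsto (fun r : ℝ => (g (a + r * b) - g a) / r) (𝓝[≠] 0) (𝓝 (g' * b)) := by
  have hline : HasDerivAt (fun r : ℝ => g (a + r * b)) (g' * b) 0 := by
    have hinner : HasDerivAt (fun r : ℝ => a + r * b) b 0 := by
      simpa using ((hasDerivAt_id (0 : ℝ)).mul_const b).const_add a
    have hg0 : HasDerivAt g g' (a + 0 * b) := by simpa using hg
    exact hg0.comp 0 hinner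
  simpa [div_eq_inv_mul] using hline.tendsto_slope_zero

end DifferenceQuotient

theorem tendsto_integral_sq_difference_quotient_sub_deriv_mul {α : Type*} [MeasurableSpace α]
    {μ : Measure α} {g : ℝ → ℝ} {L : ℝ} (hg : Differentiable ℝ g)
    (hg' : ∀ a, |deriv g a| ≤ L) {u v : α → ℝ} (hu : AEStronglyMeasurable u μ)
    (hv : MemLp v 2 μ) :
    Tendsto (fun r : ℝ => ∫ x, ((g (u x + r * v x) - g (u x)) / r - deriv g (u x) * v x) ^ 2 ∂μ)
      (𝓝[≠] 0) (𝓝 0) := by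
  have hmeas (r : ℝ) : AEStronglyMeasurable
      (fun x => ((g (u x + r * v x) - g (u x)) / r - deriv g (u x) * v x) ^ 2) μ := by
    have hvm := hv.aestronglyMeasurable
    have hderiv : AEStronglyMeasurable (fun x => deriv g (u x)) μ :=
      ((measurable_deriv g).comp_aemeasurable hu.aemeasurable).aestronglyMeasurable
    exact ((((hg.continuous.comp_aestronglyMeasurable (hu.add (hvm.const_mul r))).sub
      (hg.continuous.comp_aestronglyMeasurable hu)).mul_const r⁻¹).sub (hderiv.mul hvm)).pow 2
  have hdom : Integrable (fun x => (2 * L * |v x|) ^ 2) μ := by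
    simpa only [mul_pow, sq_abs] using hv.integrable_sq.const_mul (2 ^ 2 * L ^ 2)
  have hbound (r : ℝ) : ∀ᵐ x ∂μ,
      ‖((g (u x + r * v x) - g (u x)) / r - deriv g (u x) * v x) ^ 2‖ ≤ (2 * L * |v x|) ^ 2 :=
    ae_of_all _ fun x => by
      rw [norm_pow, Real.norm_eq_abs]
      exact pow_le_pow_left₀ (abs_nonneg _)
        (abs_difference_quotient_sub_deriv_mul_le hg hg' _ _ r) 2
  have hlim : ∀ᵐ x ∂μ, Tendsto
      (fun r : ℝ => ((g (u x + r * v x) - g (u x)) / r - deriv g (u x) * v x) ^ 2)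
      (𝓝[≠] 0) (𝓝 0) :=
    ae_of_all _ fun x => by
      simpa using (((hg (u x)).hasDerivAt.tendsto_difference_quotient (v x)).sub_const
        (deriv g (u x) * v x)).pow 2
  simpa using tendsto_integral_filter_of_dominated_convergence _ (Eventually.of_forall hmeas)
    (Eventually.of_forall hbound) hdom hlim

theorem nemytskii_gateaux_general (L : ℝ) (g : ℝ → ℝ)
    (hg : ContDiff ℝ 1 g) (hg' : ∀ a : ℝ, |deriv g a| ≤ L)
    (u v : Lp ℝ 2 (volume.restrict (Set.Ioo (0:ℝ) 1))) :
    Filter.Tendsto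
      (fun r : ℝ => ∫ x in Set.Ioo (0:ℝ) 1,
        ((g (u x + r * v x) - g (u x)) / r - deriv g (u x) * v x) ^ 2)
      (nhdsWithin 0 {0}ᶜ) (nhds 0) :=
  tendsto_integral_sq_difference_quotient_sub_deriv_mul (hg.differentiable one_ne_zero) hg'
    (Lp.aestronglyMeasurable u) (Lp.memLp v)

/-- Gâteaux differentiability of the Nemytskii operator: if `g ∈ C¹(ℝ)` has
derivative bounded by `L`, then for `u, v ∈ L²(0,1)`,
`∫₀¹ |(g(u+rv) − g(u))/r − g'(u)v|² dx → 0` as `r → 0`, `r ≠ 0`. -/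
theorem nemytskii_gateaux (L : ℝ) (hL : 0 < L) (g : ℝ → ℝ)
    (hg : ContDiff ℝ 1 g) (hg' : ∀ a : ℝ, |deriv g a| ≤ L)
    (u v : Lp ℝ 2 (volume.restrict (Set.Ioo (0:ℝ) 1))) :
    Filter.Tendsto
      (fun r : ℝ => ∫ x in Set.Ioo (0:ℝ) 1,
        ((g (u x + r * v x) - g (u x)) / r - deriv g (u x) * v x) ^ 2)
      (nhdsWithin 0 {0}ᶜ) (nhds 0) :=
  nemytskii_gateaux_general L g hg hg' u v
end
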